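/- arXiv:1206.2185 — 3 statements merged into one kernel-verified Lean document; each statement's English description precedes it below -/
import Mathlib

section
/- Let t > 0, let ν₁, …, ν_N be distinct real numbers, and let x, x' ∈ ℝ. Then, as a → 0⁺ with a restricted so that a(ν_j − x') is not a positive integer for any j, the kernel 𝐊_N^{ν,a}(t; x, x') = Σ_{j=1}^N ∫_ℝ p(t, x | ν_j) · p(t, y | 0) · Φ_ν^{ν_j,a}(x' + iy) dy converges to Σ_{j=1}^N ∫_ℝ p(t, x | ν_j) · p(t, y | 0) · Φ_ν^{ν_j}(x' + iy) dy, the equal-time correlation kernel of the noncolliding Brownian motion started from the configuration ν. -/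
open Filter Topology Finset MeasureTheory

/-- Heat kernel: transition density of one-dimensional standard Brownian motion. -/
noncomputable def heatKernel (t y x : ℝ) : ℝ :=
  Real.exp (-(x - y) ^ 2 / (2 * t)) / Real.sqrt (2 * Real.pi * t)

/-!
Fix `j` and `y ≠ 0`, and put `z = x' + iy`. Since `Γ(s) = Γ(1 + s) / s`, each ratio
`Γ(a(ν_l − ν_j)) / Γ(a(ν_l − z))` equals `(ν_l − z) / (ν_l − ν_j)` times
`Γ(1 + a(ν_l − ν_j)) / Γ(1 + a(ν_l − z))`, and the latter tends to `1` as `a → 0`. As `z` is not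
real, none of these Gamma values sits at a pole. To dominate the integrand, Euler's
reflection formula gives `‖1 / Γ(1 + s)‖ ≤ √π e^{π‖s‖}` for `|Re s| ≤ 1/2`; so for small `a` the
integrand is at most `K e^{c|y|}` times the Gaussian `p(t, y | 0)`, which is integrable.
-/

open scoped Real

theorem Real.Gamma_le_sqrt_pi {x : ℝ} (hx : x ∈ Set.Icc (1 / 2 : ℝ) (3 / 2)) :
    Real.Gamma x ≤ √π := by
  have h := convexOn_Gamma.le_max_of_mem_Icc (by norm_num : (1 / 2 : ℝ) ∈ Set.Ioi 0)
    (by norm_num : (3 / 2 : ℝ) ∈ Set.Ioi 0) hx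
  have h32 : Real.Gamma (3 / 2) = √π / 2 := by
    rw [show (3 / 2 : ℝ) = 1 / 2 + 1 by norm_num, Real.Gamma_add_one (by norm_num),
      Gamma_one_half_eq]
    ring
  rw [h32, Gamma_one_half_eq] at h
  exact h.trans (max_le le_rfl (by linarith [Real.sqrt_nonneg π]))

namespace Complex

theorem norm_Gamma_le_Gamma_re {s : ℂ} (hs : 0 < s.re) :
    ‖Gamma s‖ ≤ Real.Gamma s.re := by
  rw [Gamma_eq_integral hs, Real.Gamma_eq_integral hs, GammaIntegral]
  refine norm_integral_le_of_norm_le (Real.GammaIntegral_convergent hs) ?_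
  filter_upwards [ae_restrict_mem measurableSet_Ioi] with x hx
  rw [norm_mul, norm_real, Real.norm_eq_abs, norm_cpow_eq_rpow_re_of_pos hx,
    abs_of_pos (Real.exp_pos _)]
  simp

theorem norm_Gamma_le_sqrt_pi {s : ℂ} (hs : s.re ∈ Set.Icc (1 / 2 : ℝ) (3 / 2)) :
    ‖Gamma s‖ ≤ √Real.pi :=
  (norm_Gamma_le_Gamma_re (by linarith [hs.1])).trans (Real.Gamma_le_sqrt_pi hs)

theorem norm_sin_le_norm_mul_exp (z : ℂ) : ‖sin z‖ ≤ ‖z‖ * Real.exp ‖z‖ := by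
  have hexp (w : ℂ) : ‖exp w - 1‖ ≤ ‖w‖ * Real.exp ‖w‖ := by
    simpa using norm_exp_sub_sum_le_norm_mul_exp w 1
  have h2 : 2 * sin z = ((exp (-z * I) - 1) - (exp (z * I) - 1)) * I := by
    rw [two_sin]; ring
  have : ‖2 * sin z‖ ≤ 2 * (‖z‖ * Real.exp ‖z‖) := by
    rw [h2, norm_mul, norm_I, mul_one, two_mul]
    refine (norm_sub_le _ _).trans (add_le_add ?_ ?_) <;>
      exact (hexp _).trans_eq (by simp)
  rw [norm_mul, RCLike.norm_ofNat] at this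
  linarith

@[fun_prop]
theorem measurable_Gamma : Measurable Gamma := by
  simpa [Pi.inv_def] using differentiable_one_div_Gamma.continuous.measurable.inv

theorem Gamma_div_Gamma_eq {s s' : ℂ} (hs : s ≠ 0) (hs' : s' ≠ 0) :
    Gamma s / Gamma s' = s' / s * (Gamma (1 + s) / Gamma (1 + s')) := by
  rw [add_comm 1 s, add_comm 1 s', Gamma_add_one s hs, Gamma_add_one s' hs', mul_div_mul_comm,
    ← mul_assoc, div_mul_div_comm, mul_comm s' s, div_self (mul_ne_zero hs hs'), one_mul]

/-- Euler's reflection formula, in a form without a pole at `s = 0`. -/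
theorem Gamma_one_add_mul_Gamma_one_sub {s : ℂ} (hs : |s.re| < 1) :
    Gamma (1 + s) * Gamma (1 - s) * sin (π * s) = π * s := by
  rcases eq_or_ne s 0 with rfl | hs0
  · simp
  have hsin : sin (π * s) ≠ 0 := by
    rw [sin_ne_zero_iff]
    intro k hk
    have hsk : s = k := mul_left_cancel₀ (ofReal_ne_zero.2 Real.pi_ne_zero) (by rw [hk]; ring)
    have hk0 : k = 0 := by
      rw [hsk] at hs
      have : |(k : ℝ)| < 1 := by simpa using hs
      have : |k| < 1 := by exact_mod_cast this
      exact Int.abs_lt_one_iff.mp this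
    exact hs0 (by simp [hsk, hk0])
  have hrefl := Gamma_mul_Gamma_one_sub (1 + s)
  rw [show 1 - (1 + s) = -s by ring, show (π : ℂ) * (1 + s) = π * s + π by ring, sin_add_pi]
    at hrefl
  have hneg : Gamma (1 - s) = -s * Gamma (-s) := by
    rw [← Gamma_add_one _ (neg_ne_zero.2 hs0)]; ring_nf
  rw [hneg, show Gamma (1 + s) * (-s * Gamma (-s)) = -s * (Gamma (1 + s) * Gamma (-s)) by ring,
    hrefl, div_neg, neg_mul_neg, mul_assoc, div_mul_cancel₀ _ hsin, mul_comm]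

theorem norm_inv_Gamma_one_add_le {s : ℂ} (hs : |s.re| ≤ 1 / 2) :
    ‖(Gamma (1 + s))⁻¹‖ ≤ √π * Real.exp (π * ‖s‖) := by
  obtain ⟨hs₁, hs₂⟩ := abs_le.mp hs
  rcases eq_or_ne s 0 with rfl | hs0
  · simpa using Real.one_le_sqrt.mpr (by linarith [Real.pi_gt_three])
  have hπs : (π * s : ℂ) ≠ 0 := mul_ne_zero (ofReal_ne_zero.2 Real.pi_ne_zero) hs0
  have hΓ : Gamma (1 + s) ≠ 0 := Gamma_ne_zero_of_re_pos (by simp; linarith)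
  have hinv : (Gamma (1 + s))⁻¹ = Gamma (1 - s) * (sin (π * s) / (π * s)) := by
    have h := Gamma_one_add_mul_Gamma_one_sub (hs.trans_lt (by norm_num))
    generalize (π : ℂ) * s = w at h hπs ⊢
    field_simp
    linear_combination -h
  have hπs_norm : ‖(π * s : ℂ)‖ = π * ‖s‖ := by simp [Real.pi_pos.le]
  rw [hinv, norm_mul, norm_div, hπs_norm]
  gcongr
  · exact norm_Gamma_le_sqrt_pi (by simp; constructor <;> linarith)
  · rw [div_le_iff₀ (hπs_norm ▸ norm_pos_iff.2 hπs), ← hπs_norm]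
    exact (norm_sin_le_norm_mul_exp _).trans_eq (mul_comm _ _)

theorem norm_Gamma_div_Gamma_le {s s' : ℂ} (hs : s ≠ 0) (hs' : s' ≠ 0) (hre : |s.re| ≤ 1 / 2)
    (hre' : |s'.re| ≤ 1 / 2) :
    ‖Gamma s / Gamma s'‖ ≤ π * (‖s'‖ / ‖s‖) * Real.exp (π * ‖s'‖) := by
  obtain ⟨h₁, h₂⟩ := abs_le.mp hre
  rw [Gamma_div_Gamma_eq hs hs', div_eq_mul_inv (Gamma _), norm_mul, norm_mul, norm_div]
  calc ‖s'‖ / ‖s‖ * (‖Gamma (1 + s)‖ * ‖(Gamma (1 + s'))⁻¹‖)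
      ≤ ‖s'‖ / ‖s‖ * (√π * (√π * Real.exp (π * ‖s'‖))) := by
        gcongr
        · exact norm_Gamma_le_sqrt_pi (by simp; constructor <;> linarith)
        · exact norm_inv_Gamma_one_add_le hre'
    _ = √π * √π * (‖s'‖ / ‖s‖) * Real.exp (π * ‖s'‖) := by ring
    _ = π * (‖s'‖ / ‖s‖) * Real.exp (π * ‖s'‖) := by rw [Real.mul_self_sqrt Real.pi_pos.le]

theorem norm_Gamma_mul_div_Gamma_mul_le {a : ℝ} {u w : ℂ} (ha : a ≠ 0) (ha₁ : |a| ≤ 1)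
    (hu : u ≠ 0) (hw : w ≠ 0) (hau : |a * u.re| ≤ 1 / 2) (haw : |a * w.re| ≤ 1 / 2) :
    ‖Gamma (a * u) / Gamma (a * w)‖ ≤ π / ‖u‖ * Real.exp ((1 + π) * ‖w‖) := by
  have ha' : (a : ℂ) ≠ 0 := ofReal_ne_zero.2 ha
  refine (norm_Gamma_div_Gamma_le (mul_ne_zero ha' hu) (mul_ne_zero ha' hw)
    (by simpa using hau) (by simpa using haw)).trans ?_
  have hwa : ‖(a : ℂ) * w‖ ≤ ‖w‖ := by
    rw [norm_mul, norm_real, Real.norm_eq_abs]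
    exact mul_le_of_le_one_left (norm_nonneg w) ha₁
  calc π * (‖(a : ℂ) * w‖ / ‖(a : ℂ) * u‖) * Real.exp (π * ‖(a : ℂ) * w‖)
      = π / ‖u‖ * (‖w‖ * Real.exp (π * ‖(a : ℂ) * w‖)) := by
        rw [norm_mul, norm_mul, mul_div_mul_left _ _ (norm_ne_zero_iff.2 ha')]; ring
    _ ≤ π / ‖u‖ * (Real.exp ‖w‖ * Real.exp (π * ‖w‖)) := by
        gcongr
        linarith [Real.add_one_le_exp ‖w‖]
    _ = π / ‖u‖ * Real.exp ((1 + π) * ‖w‖) := by rw [← Real.exp_add]; ring_nf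

end Complex

theorem heatKernel_nonneg (t y x : ℝ) : 0 ≤ heatKernel t y x := by
  unfold heatKernel; positivity

theorem integrable_heatKernel_mul_exp_abs {t : ℝ} (ht : 0 < t) (c : ℝ) :
    Integrable fun y => heatKernel t y 0 * Real.exp (c * |y|) := by
  refine ((integrable_exp_neg_mul_sq (b := 1 / (4 * t)) (by positivity)).const_mul
    (Real.exp (c ^ 2 * t) / √(2 * π * t))).mono' (by unfold heatKernel; fun_prop) ?_
  refine Eventually.of_forall fun y => ?_
  have hexp : -(0 - y) ^ 2 / (2 * t) + c * |y| ≤ c ^ 2 * t + -(1 / (4 * t)) * y ^ 2 := by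
    have := sq_nonneg (2 * c * t - |y|)
    rw [zero_sub, neg_sq, ← sq_abs y]
    field_simp
    nlinarith
  rw [Real.norm_of_nonneg (mul_nonneg (heatKernel_nonneg _ _ _) (Real.exp_pos _).le), heatKernel,
    div_mul_eq_mul_div, ← Real.exp_add, div_mul_eq_mul_div, ← Real.exp_add]
  gcongr

/-- `Φ_ν^{ν_j}`: the Lagrange basis polynomial of the nodes `ν` at `ν j`. -/
noncomputable def lagrangeBasis {N : ℕ} (ν : Fin N → ℝ) (j : Fin N) (z : ℂ) : ℂ :=
  ∏ l ∈ univ.erase j, ((ν l : ℂ) - z) / ((ν l : ℂ) - (ν j : ℂ))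

/-- `Φ_ν^{ν_j,a}`. -/
noncomputable def gammaBasis {N : ℕ} (ν : Fin N → ℝ) (j : Fin N) (a : ℝ) (z : ℂ) : ℂ :=
  Complex.Gamma (1 - (a : ℂ) * ((ν j : ℂ) - z)) *
    ∏ l ∈ univ.erase j,
      Complex.Gamma ((a : ℂ) * ((ν l : ℂ) - (ν j : ℂ))) / Complex.Gamma ((a : ℂ) * ((ν l : ℂ) - z))

section Basis

variable {N : ℕ} {ν : Fin N → ℝ}

theorem gammaBasis_eq (hν : Function.Injective ν) (j : Fin N) {a : ℝ} (ha : a ≠ 0) {z : ℂ}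
    (hz : ∀ l, (ν l : ℂ) ≠ z) :
    gammaBasis ν j a z = Complex.Gamma (1 - (a : ℂ) * ((ν j : ℂ) - z)) *
      ∏ l ∈ univ.erase j, (((ν l : ℂ) - z) / ((ν l : ℂ) - (ν j : ℂ)) *
        (Complex.Gamma (1 + a * ((ν l : ℂ) - (ν j : ℂ))) /
          Complex.Gamma (1 + a * ((ν l : ℂ) - z)))) := by
  have ha' : (a : ℂ) ≠ 0 := Complex.ofReal_ne_zero.2 ha
  refine congrArg _ (prod_congr rfl fun l hl => ?_)
  have hlj : (ν l : ℂ) - ν j ≠ 0 :=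
    sub_ne_zero.2 (by exact_mod_cast hν.ne (ne_of_mem_erase hl))
  rw [Complex.Gamma_div_Gamma_eq (mul_ne_zero ha' hlj) (mul_ne_zero ha' (sub_ne_zero.2 (hz l))),
    mul_div_mul_left _ _ ha']

theorem tendsto_Gamma_one_add_mul (w : ℂ) :
    Tendsto (fun a : ℝ => Complex.Gamma (1 + a * w)) (𝓝 0) (𝓝 1) := by
  have hΓ : ContinuousAt Complex.Gamma 1 := Complex.differentiableAt_Gamma_one.continuousAt
  have harg : Tendsto (fun a : ℝ => 1 + (a : ℂ) * w) (𝓝 0) (𝓝 1) := by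
    simpa using ((Complex.continuous_ofReal.mul continuous_const).const_add (1 : ℂ)).tendsto 0
  have := hΓ.tendsto.comp harg
  rwa [Complex.Gamma_one] at this

theorem tendsto_gammaBasis (hν : Function.Injective ν) (j : Fin N) {z : ℂ}
    (hz : ∀ l, (ν l : ℂ) ≠ z) :
    Tendsto (fun a => gammaBasis ν j a z) (𝓝[≠] 0) (𝓝 (lagrangeBasis ν j z)) := by
  have hlim : Tendsto (fun a : ℝ => Complex.Gamma (1 - (a : ℂ) * ((ν j : ℂ) - z)) *
      ∏ l ∈ univ.erase j, (((ν l : ℂ) - z) / ((ν l : ℂ) - (ν j : ℂ)) *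
        (Complex.Gamma (1 + a * ((ν l : ℂ) - (ν j : ℂ))) /
          Complex.Gamma (1 + a * ((ν l : ℂ) - z))))) (𝓝 0) (𝓝 (lagrangeBasis ν j z)) := by
    have hfirst := tendsto_Gamma_one_add_mul (-((ν j : ℂ) - z))
    simp only [mul_neg, ← sub_eq_add_neg] at hfirst
    have hprod := tendsto_finsetProd (univ.erase j) fun l _ =>
      ((tendsto_Gamma_one_add_mul ((ν l : ℂ) - ν j)).div
        (tendsto_Gamma_one_add_mul ((ν l : ℂ) - z)) one_ne_zero).const_mul
        (((ν l : ℂ) - z) / ((ν l : ℂ) - (ν j : ℂ)))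
    simpa [lagrangeBasis] using hfirst.mul hprod
  refine (hlim.mono_left nhdsWithin_le_nhds).congr' ?_
  filter_upwards [self_mem_nhdsWithin] with a ha
  exact (gammaBasis_eq hν j ha hz).symm

theorem exists_norm_gammaBasis_le (hν : Function.Injective ν) (j : Fin N) (x' : ℝ) :
    ∃ K c : ℝ, ∀ᶠ a in 𝓝[≠] (0 : ℝ), ∀ y : ℝ, y ≠ 0 →
      ‖gammaBasis ν j a (x' + Complex.I * y)‖ ≤ K * Real.exp (c * |y|) := by
  set R := 1 + ∑ l, |ν l - x'|
  have hR (l : Fin N) : |ν l - x'| ≤ R := by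
    have := single_le_sum (fun l _ => abs_nonneg (ν l - x')) (mem_univ l)
    linarith
  have hR₁ : 1 ≤ R := le_add_of_nonneg_right (sum_nonneg fun l _ => abs_nonneg _)
  refine ⟨√π * (∏ l ∈ univ.erase j, π / ‖(ν l : ℂ) - ν j‖) *
    Real.exp ((univ.erase j).card * ((1 + π) * R)), (univ.erase j).card * (1 + π), ?_⟩
  have hsmall : ∀ᶠ a in 𝓝[≠] (0 : ℝ), a ≠ 0 ∧ |a| ≤ 1 / (4 * R) := by
    filter_upwards [self_mem_nhdsWithin, nhdsWithin_le_nhds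
      (Metric.closedBall_mem_nhds (0 : ℝ) (by positivity : 0 < 1 / (4 * R)))] with a ha haδ
    exact ⟨ha, by simpa using haδ⟩
  filter_upwards [hsmall] with a ⟨ha, haδ⟩ y hy
  have haR (l : Fin N) : |a * (ν l - x')| ≤ 1 / 4 := by
    rw [abs_mul]
    calc |a| * |ν l - x'| ≤ 1 / (4 * R) * R := by gcongr; exact hR l
      _ = 1 / 4 := by field_simp
  have hw (l : Fin N) : ‖(ν l : ℂ) - (x' + Complex.I * y)‖ ≤ R + |y| := by
    refine (Complex.norm_le_abs_re_add_abs_im _).trans ?_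
    simpa using add_le_add_left (hR l) |y|
  have hfirst : ‖Complex.Gamma (1 - (a : ℂ) * ((ν j : ℂ) - (x' + Complex.I * y)))‖ ≤ √π := by
    obtain ⟨h₁, h₂⟩ := abs_le.mp (haR j)
    exact Complex.norm_Gamma_le_sqrt_pi (by simp; constructor <;> linarith)
  have hfactor : ∀ l ∈ univ.erase j,
      ‖Complex.Gamma ((a : ℂ) * ((ν l : ℂ) - ν j)) /
        Complex.Gamma ((a : ℂ) * ((ν l : ℂ) - (x' + Complex.I * y)))‖ ≤
        π / ‖(ν l : ℂ) - ν j‖ * Real.exp ((1 + π) * (R + |y|)) := by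
    intro l hl
    have hu : (ν l : ℂ) - ν j ≠ 0 :=
      sub_ne_zero.2 (by exact_mod_cast hν.ne (ne_of_mem_erase hl))
    have hw0 : (ν l : ℂ) - (x' + Complex.I * y) ≠ 0 := fun h =>
      hy (by simpa using congrArg Complex.im h)
    have hau : |a * ((ν l : ℂ) - ν j).re| ≤ 1 / 2 := by
      simpa [mul_sub] using (abs_sub (a * (ν l - x')) (a * (ν j - x'))).trans
        (by linarith [haR l, haR j])
    have ha₁ : |a| ≤ 1 := haδ.trans (by rw [div_le_one (by positivity)]; linarith)
    refine (Complex.norm_Gamma_mul_div_Gamma_mul_le ha ha₁ hu hw0 hau ?_).trans ?_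
    · simpa using (haR l).trans (by norm_num)
    · gcongr
      exact hw l
  calc ‖gammaBasis ν j a (x' + Complex.I * y)‖
      ≤ √π * ∏ l ∈ univ.erase j, π / ‖(ν l : ℂ) - ν j‖ * Real.exp ((1 + π) * (R + |y|)) := by
        rw [gammaBasis, norm_mul]
        gcongr
        exact (Finset.norm_prod_le _ _).trans (prod_le_prod (fun _ _ => norm_nonneg _) hfactor)
    _ = _ := by
        rw [prod_mul_distrib, prod_const, ← Real.exp_nat_mul, mul_assoc (√π * _),
          ← Real.exp_add, mul_assoc]
        congr 3; ring

theorem tendsto_integral_heatKernel_mul_gammaBasis {t : ℝ} (ht : 0 < t)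
    (hν : Function.Injective ν) (j : Fin N) (x x' : ℝ) :
    Tendsto (fun a => ∫ y : ℝ, (heatKernel t x (ν j) : ℂ) * (heatKernel t y 0 : ℂ) *
        gammaBasis ν j a (x' + Complex.I * y)) (𝓝[≠] 0)
      (𝓝 (∫ y : ℝ, (heatKernel t x (ν j) : ℂ) * (heatKernel t y 0 : ℂ) *
        lagrangeBasis ν j (x' + Complex.I * y))) := by
  obtain ⟨K, c, hK⟩ := exists_norm_gammaBasis_le hν j x'
  have hy₀ : ∀ᵐ y : ℝ, y ≠ 0 := compl_mem_ae_iff.mpr (measure_singleton 0)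
  refine tendsto_integral_filter_of_dominated_convergence
    (fun y => heatKernel t x (ν j) * K * (heatKernel t y 0 * Real.exp (c * |y|))) ?_ ?_ ?_ ?_
  · refine Eventually.of_forall fun a => Measurable.aestronglyMeasurable ?_
    unfold heatKernel gammaBasis
    fun_prop
  · filter_upwards [hK] with a ha
    filter_upwards [hy₀] with y hy
    rw [norm_mul, norm_mul, Complex.norm_real, Complex.norm_real,
      Real.norm_of_nonneg (heatKernel_nonneg _ _ _), Real.norm_of_nonneg (heatKernel_nonneg _ _ _)]
    calc _ ≤ heatKernel t x (ν j) * heatKernel t y 0 * (K * Real.exp (c * |y|)) := by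
          gcongr
          · exact mul_nonneg (heatKernel_nonneg _ _ _) (heatKernel_nonneg _ _ _)
          · exact ha y hy
      _ = _ := by ring
  · exact (integrable_heatKernel_mul_exp_abs ht c).const_mul _
  · filter_upwards [hy₀] with y hy
    refine (tendsto_gammaBasis hν j fun l h => hy ?_).const_mul _
    simpa using congrArg Complex.im h.symm

end Basis

/-- Combinatorial limit `a → 0⁺` of the kernel `𝐊_N^{ν,a}(t; x, x')`:
it converges to the equal-time correlation kernel of the noncolliding Brownian
motion started from the configuration `ν`. The parameter `a` is restricted so that
`a(ν_j − x')` is never a positive integer, keeping the integrand pole-free. -/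
theorem kernel_combinatorial_limit (N : ℕ) (t : ℝ) (ht : 0 < t) (ν : Fin N → ℝ)
    (hν : Function.Injective ν) (x x' : ℝ) :
    Tendsto
      (fun a : ℝ => ∑ j : Fin N, ∫ y : ℝ,
        (heatKernel t x (ν j) : ℂ) * (heatKernel t y 0 : ℂ) *
          (Complex.Gamma (1 - (a : ℂ) * ((ν j : ℂ) - ((x' : ℂ) + Complex.I * (y : ℂ)))) *
            ∏ l ∈ univ.erase j,
              Complex.Gamma ((a : ℂ) * ((ν l : ℂ) - (ν j : ℂ))) /
                Complex.Gamma ((a : ℂ) * ((ν l : ℂ) - ((x' : ℂ) + Complex.I * (y : ℂ))))))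
      (𝓝[{a : ℝ | 0 < a ∧ ∀ j : Fin N, ∀ n : ℕ, a * (ν j - x') ≠ (n : ℝ) + 1}] 0)
      (𝓝 (∑ j : Fin N, ∫ y : ℝ,
        (heatKernel t x (ν j) : ℂ) * (heatKernel t y 0 : ℂ) *
          ∏ l ∈ univ.erase j,
            ((ν l : ℂ) - ((x' : ℂ) + Complex.I * (y : ℂ))) / ((ν l : ℂ) - (ν j : ℂ)))) :=
  tendsto_finsetSum _ fun j _ => (tendsto_integral_heatKernel_mul_gammaBasis ht hν j x x').mono_left
    (nhdsWithin_mono _ fun _ ha => ha.1.ne')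
end

section
/- Let t > 0, let ν₁, …, ν_N be real numbers, let χ : ℝ → ℝ be bounded and measurable, and let Φ₁, …, Φ_N : ℂ → ℂ be measurable functions such that for all j, k the function (v, w) ↦ Φ_j(v + iw)·p(t, v | ν_k)·p(t, w | 0) is Lebesgue integrable on ℝ². Define K(x, x') = Σ_{j=1}^N p(t, x | ν_j) · ∫_ℝ p(t, y | 0)·Φ_j(x' + iy) dy. Then Σ_{L=0}^N ((−1)^L / L!) ∫_{ℝ^L} ∏_{i=1}^L χ(x_i) · det_{1 ≤ i,k ≤ L}[K(x_i, x_k)] dx₁⋯dx_L = ∫_{ℝ^{2N}} det_{1 ≤ j,k ≤ N}[δ_{jk} − Φ_j(v_k + i w_k)·χ(v_k)] · ∏_{k=1}^N p(t, v_k | ν_k)·p(t, w_k | 0) dv₁⋯dv_N dw₁⋯dw_N. (This is the complex-Brownian-motion representation: v_k + i w_k is the position at time t of an independent complex Brownian motion started at ν_k.) -/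
/-!
The kernel `K(x, x') = ∑ⱼ p(t, x | νⱼ) ψⱼ(x')`, with `ψⱼ(x') = ∫ p(t, y | 0) Φⱼ(x' + i y) dy`,
has rank `N`. Expanding `det[K(xᵢ, xₖ)]` over maps `f : Fin L → Fin N` and integrating term by
term gives `∑_f det B_{f,f}` with `Bⱼₖ = ∫ ψⱼ χ p(t, · | νₖ)`: non-injective `f` contribute
nothing and every `L`-element set of indices is the image of `L!` maps, so the Fredholm series
is `∑_S (-1)^|S| det B_{S,S} = det (1 - B)`.

In `det[δⱼₖ - Φⱼ(vₖ + i wₖ) χ(vₖ)]` column `k` depends only on `(vₖ, wₖ)`, so its expectation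
under the product of independent Gaussians is the determinant of the column expectations, and by
Fubini in `w` these are exactly `δⱼₖ - Bⱼₖ`.
-/

open Finset MeasureTheory

open Matrix Complex
open scoped Nat

namespace Matrix

variable {n R : Type*} [CommRing R]

theorem det_submatrix_self_eq_zero_of_not_injective {m : Type*} [Fintype m] [DecidableEq m]
    (M : Matrix n n R) {f : m → n} (hf : ¬ f.Injective) : (M.submatrix f f).det = 0 := by
  obtain ⟨i, j, hij, hne⟩ : ∃ i j, f i = f j ∧ i ≠ j := by
    simpa [Function.Injective] using hf
  exact det_zero_of_row_eq hne (by ext k; simp [hij])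

-- Cauchy–Binet, summed over all maps `m → ι` rather than over subsets of `ι`.
theorem det_mul_eq_sum_det {m ι : Type*} [Fintype m] [DecidableEq m] [Fintype ι]
    (P : Matrix m ι R) (Q : Matrix ι m R) :
    det (P * Q) = ∑ f : m → ι, det (of fun i k => P k (f k) * Q (f i) k) := by
  let D : (m → R) [⋀^m]→ₗ[R] R := detRowAlternating
  calc det (P * Q) = D fun i => ∑ j, P i j • Q.row j := by
        congr 1
        ext i k
        simp [mul_apply, Finset.sum_apply, Matrix.row]
    _ = ∑ f : m → ι, D fun i => P i (f i) • Q.row (f i) := D.toMultilinearMap.map_sum _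
    _ = _ := sum_congr rfl fun f _ => by
        rw [D.map_smul_univ, smul_eq_mul]
        exact (det_mul_row (fun k => P k (f k)) (of fun i k => Q (f i) k)).symm

variable [Fintype n] [DecidableEq n]

theorem det_one_add_eq_sum_det_submatrix (M : Matrix n n R) :
    det (1 + M) = ∑ s : Finset n, (M.submatrix (Subtype.val : s → n) Subtype.val).det := by
  rw [add_comm]
  change detRowAlternating (M.row + (1 : Matrix n n R).row) = _
  rw [AlternatingMap.map_add_univ]
  exact sum_congr rfl fun s _ => det_piecewise_one_eq_submatrix_det M s

theorem sum_det_submatrix_of_image_eq {L : ℕ} (M : Matrix n n R) {s : Finset n}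
    (hs : s.card = L) :
    ∑ f : Fin L → n with univ.image f = s, (M.submatrix f f).det
      = L ! • (M.submatrix (Subtype.val : s → n) Subtype.val).det := by
  have hcard : Fintype.card (Fin L ≃ s) = L ! := by
    rw [Fintype.card_equiv (Fintype.equivOfCardEq (α := Fin L) (β := s) (by simp [hs])),
      Fintype.card_fin]
  rw [← hcard, ← card_univ, ← sum_const]
  refine (sum_bij (fun (e : Fin L ≃ s) _ => Subtype.val ∘ e) (fun e _ => ?_)
    (fun e₁ _ e₂ _ h => ?_) (fun f hf => ?_) (fun e _ => ?_)).symm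
  · rw [mem_filter]
    refine ⟨mem_univ _, Finset.ext fun x => ?_⟩
    simp only [mem_image, mem_univ, true_and, Function.comp_apply]
    exact ⟨fun ⟨i, hi⟩ => hi ▸ (e i).2, fun hx => ⟨e.symm ⟨x, hx⟩, by simp⟩⟩
  · exact Equiv.ext fun i => Subtype.val_injective (congrFun h i)
  · have himage : univ.image f = s := (mem_filter.1 hf).2
    have hinj : f.Injective := by
      rw [← Set.injOn_univ, ← coe_univ, ← card_image_iff, himage, hs, card_univ,
        Fintype.card_fin]
    have hmem : ∀ i, f i ∈ s := fun i => himage ▸ mem_image_of_mem f (mem_univ i)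
    have hbij : Function.Bijective fun i => (⟨f i, hmem i⟩ : s) :=
      (Fintype.bijective_iff_injective_and_card _).2
        ⟨fun i j h => hinj (congrArg Subtype.val h), by simp [hs]⟩
    exact ⟨Equiv.ofBijective _ hbij, mem_univ _, rfl⟩
  · rw [← submatrix_submatrix, det_submatrix_equiv_self]

theorem sum_det_submatrix_eq_factorial_smul (L : ℕ) (M : Matrix n n R) :
    ∑ f : Fin L → n, (M.submatrix f f).det
      = L ! • ∑ s ∈ univ.powersetCard L,
          (M.submatrix (Subtype.val : s → n) Subtype.val).det := by
  rw [← sum_fiberwise univ (fun f : Fin L → n => univ.image f), smul_sum]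
  have hfiber : ∀ s ∉ univ.powersetCard L,
      ∑ f : Fin L → n with univ.image f = s, (M.submatrix f f).det = 0 := by
    refine fun s hs => sum_eq_zero fun f hf =>
      det_submatrix_self_eq_zero_of_not_injective M fun hinj => hs ?_
    rw [mem_powersetCard, ← (mem_filter.1 hf).2, card_image_of_injective _ hinj]
    simp
  rw [← sum_subset (subset_univ _) fun s _ hs => hfiber s hs]
  exact sum_congr rfl fun s hs => sum_det_submatrix_of_image_eq M (mem_powersetCard.1 hs).2

theorem det_one_sub_eq_sum_range {K : Type*} [Field K] [CharZero K] (M : Matrix n n K) :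
    det (1 - M) = ∑ L ∈ range (Fintype.card n + 1),
      (-1) ^ L / (L ! : K) * ∑ f : Fin L → n, (M.submatrix f f).det := by
  rw [sub_eq_add_neg, det_one_add_eq_sum_det_submatrix, ← powerset_univ, sum_powerset,
    card_univ]
  refine sum_congr rfl fun L _ => ?_
  rw [sum_det_submatrix_eq_factorial_smul, nsmul_eq_mul, mul_sum, mul_sum]
  refine sum_congr rfl fun s hs => ?_
  rw [show (-M).submatrix (Subtype.val : s → n) Subtype.val
      = -M.submatrix Subtype.val Subtype.val from rfl,
    det_neg, Fintype.card_coe, (mem_powersetCard.1 hs).2]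
  field_simp [Nat.factorial_ne_zero]

end Matrix

theorem heatKernel_eq_gaussianPDFReal {t : ℝ} (ht : 0 ≤ t) (x y : ℝ) :
    heatKernel t x y = ProbabilityTheory.gaussianPDFReal y t.toNNReal x := by
  rw [heatKernel, ProbabilityTheory.gaussianPDFReal, Real.coe_toNNReal _ ht, div_eq_inv_mul,
    sub_sq_comm]

theorem integrable_heatKernel {t : ℝ} (ht : 0 ≤ t) (y : ℝ) :
    Integrable fun x => (heatKernel t x y : ℂ) := by
  simp_rw [heatKernel_eq_gaussianPDFReal ht]
  exact (ProbabilityTheory.integrable_gaussianPDFReal y _).ofReal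

theorem integral_heatKernel {t : ℝ} (ht : 0 < t) (y : ℝ) :
    ∫ x, (heatKernel t x y : ℂ) = 1 := by
  simp_rw [integral_complex_ofReal, heatKernel_eq_gaussianPDFReal ht.le]
  rw [ProbabilityTheory.integral_gaussianPDFReal_eq_one y (by simpa using ht), ofReal_one]

section Columns

variable {𝕜 ι Y : Type*} [RCLike 𝕜] [Fintype ι] [MeasurableSpace Y]
  {μ : Measure Y} [SigmaFinite μ]

theorem integrable_det_of_columns [DecidableEq ι] {F : ι → ι → Y → 𝕜}
    (hF : ∀ j k, Integrable (F j k) μ) :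
    Integrable (fun y : ι → Y => det (of fun j k => F j k (y k))) (Measure.pi fun _ => μ) := by
  simp_rw [det_apply', of_apply]
  exact integrable_finsetSum _ fun σ _ =>
    (Integrable.fintype_prod fun k => hF (σ k) k).const_mul _

theorem integral_det_of_columns [DecidableEq ι] {F : ι → ι → Y → 𝕜}
    (hF : ∀ j k, Integrable (F j k) μ) :
    ∫ y : ι → Y, det (of fun j k => F j k (y k)) ∂(Measure.pi fun _ => μ)
      = det (of fun j k => ∫ z, F j k z ∂μ) := by
  simp_rw [det_apply', of_apply]
  rw [integral_finsetSum _ fun σ _ => (Integrable.fintype_prod fun k => hF (σ k) k).const_mul _]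
  simp_rw [integral_const_mul, integral_fintype_prod_eq_prod]

theorem integral_det_degenerate_kernel {κ : Type*} [Fintype κ] [DecidableEq κ]
    {a b : ι → Y → 𝕜} (hab : ∀ j k, Integrable (fun x => b j x * a k x) μ) :
    ∫ x : κ → Y, det (of fun i k => ∑ j, a j (x i) * b j (x k)) ∂(Measure.pi fun _ => μ)
      = ∑ f : κ → ι, det ((of fun j k => ∫ x, b j x * a k x ∂μ).submatrix f f) := by
  have hpt : ∀ x : κ → Y, det (of fun i k => ∑ j, a j (x i) * b j (x k))
      = ∑ f : κ → ι, det (of fun i k => b (f i) (x k) * a (f k) (x k)) := by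
    intro x
    rw [show (of fun i k => ∑ j, a j (x i) * b j (x k))
        = (of fun i j => a j (x i)) * (of fun j k => b j (x k)) by ext; simp [mul_apply],
      det_mul_eq_sum_det]
    simp_rw [of_apply, mul_comm]
  simp_rw [hpt]
  rw [integral_finsetSum _ fun f _ => integrable_det_of_columns fun i k => hab (f i) (f k)]
  exact sum_congr rfl fun f _ => integral_det_of_columns fun i k => hab (f i) (f k)

end Columns

theorem integral_integral_pi_eq_integral_pi_prod {ι α β E : Type*} [Fintype ι]
    [MeasurableSpace α] [MeasurableSpace β] [NormedAddCommGroup E] [NormedSpace ℝ E]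
    {μ : Measure α} {ν : Measure β} [SigmaFinite μ] [SigmaFinite ν]
    {g : (ι → α × β) → E} (hg : Integrable g (Measure.pi fun _ => μ.prod ν)) :
    ∫ v, ∫ w, g (fun k => (v k, w k)) ∂(Measure.pi fun _ => ν) ∂(Measure.pi fun _ => μ)
      = ∫ q, g q ∂(Measure.pi fun _ => μ.prod ν) := by
  have hmp := (measurePreserving_arrowProdEquivProdArrow α β ι (fun _ => μ) (fun _ => ν)).symm
  have hg' : Integrable (Function.uncurry fun (v : ι → α) (w : ι → β) => g fun k => (v k, w k))
      ((Measure.pi fun _ => μ).prod (Measure.pi fun _ => ν)) :=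
    (hmp.integrable_comp_emb (MeasurableEquiv.measurableEmbedding _)).2 hg
  rw [integral_integral hg']
  exact hmp.integral_comp' g

noncomputable def verticalHeatMean (t : ℝ) (Φ : ℂ → ℂ) (x : ℝ) : ℂ :=
  ∫ y : ℝ, (heatKernel t y 0 : ℂ) * Φ ((x : ℂ) + I * (y : ℂ))

noncomputable def weightedVerticalIntegrand (t ν : ℝ) (χ : ℝ → ℝ) (Φ : ℂ → ℂ) (q : ℝ × ℝ) :
    ℂ :=
  χ q.1 * (Φ ((q.1 : ℂ) + I * (q.2 : ℂ)) * heatKernel t q.1 ν * heatKernel t q.2 0)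

section WeightedVerticalIntegrand

variable {t ν : ℝ} {χ : ℝ → ℝ} {Φ : ℂ → ℂ}

theorem integral_weightedVerticalIntegrand_slice (x : ℝ) :
    ∫ y, weightedVerticalIntegrand t ν χ Φ (x, y)
      = verticalHeatMean t Φ x * (χ x * heatKernel t x ν) := by
  rw [verticalHeatMean, ← integral_mul_const]
  congr 1 with y
  rw [weightedVerticalIntegrand]
  ring

theorem integrable_weightedVerticalIntegrand (hχ : Measurable χ)
    (hχbd : ∃ C, ∀ x, |χ x| ≤ C) (hΦ : Integrable (fun q : ℝ × ℝ =>
      Φ ((q.1 : ℂ) + I * (q.2 : ℂ)) * (heatKernel t q.1 ν : ℂ) * (heatKernel t q.2 0 : ℂ))) :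
    Integrable (weightedVerticalIntegrand t ν χ Φ) (volume.prod volume) := by
  obtain ⟨C, hC⟩ := hχbd
  exact hΦ.bdd_mul
    (Complex.measurable_ofReal.comp (hχ.comp measurable_fst)).aestronglyMeasurable
    (.of_forall fun q => by simpa [Complex.norm_real] using hC q.1)

theorem heatKernel_prod_mul_sub_eq (c : ℂ) (q : ℝ × ℝ) :
    (heatKernel t q.1 ν * heatKernel t q.2 0 : ℂ) * (c - Φ ((q.1 : ℂ) + I * (q.2 : ℂ)) * χ q.1)
      = c * (heatKernel t q.1 ν * heatKernel t q.2 0 : ℂ)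
        - weightedVerticalIntegrand t ν χ Φ q := by
  rw [weightedVerticalIntegrand]
  ring

variable (hG : Integrable (weightedVerticalIntegrand t ν χ Φ) (volume.prod volume))
include hG

theorem integrable_verticalHeatMean_mul :
    Integrable (fun x => verticalHeatMean t Φ x * (χ x * heatKernel t x ν)) :=
  hG.integral_prod_left.congr (.of_forall integral_weightedVerticalIntegrand_slice)

theorem integrable_heatKernel_prod_mul_sub (ht : 0 ≤ t) (c : ℂ) :
    Integrable (fun q : ℝ × ℝ => (heatKernel t q.1 ν * heatKernel t q.2 0 : ℂ) *
      (c - Φ ((q.1 : ℂ) + I * (q.2 : ℂ)) * χ q.1)) (volume.prod volume) := by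
  simp_rw [heatKernel_prod_mul_sub_eq]
  exact (((integrable_heatKernel ht ν).mul_prod (integrable_heatKernel ht 0)).const_mul c).sub hG

theorem integral_heatKernel_prod_mul_sub (ht : 0 < t) (c : ℂ) :
    ∫ q : ℝ × ℝ, (heatKernel t q.1 ν * heatKernel t q.2 0 : ℂ) *
      (c - Φ ((q.1 : ℂ) + I * (q.2 : ℂ)) * χ q.1) ∂(volume.prod volume)
      = c - ∫ x, verticalHeatMean t Φ x * (χ x * heatKernel t x ν) := by
  have hρ := (integrable_heatKernel ht.le ν).mul_prod (integrable_heatKernel ht.le 0)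
  simp_rw [heatKernel_prod_mul_sub_eq]
  rw [integral_sub (hρ.const_mul c) hG, integral_const_mul,
    integral_prod_mul (fun x => (heatKernel t x ν : ℂ)) (fun y => (heatKernel t y 0 : ℂ)),
    integral_heatKernel ht, integral_heatKernel ht, integral_prod _ hG]
  simp_rw [integral_weightedVerticalIntegrand_slice, mul_one]

end WeightedVerticalIntegrand

-- The matrix `B` of the proof sketch above, with `ψⱼ = verticalHeatMean t (Φ j)`.
noncomputable def compressedKernel {ι : Type*} (t : ℝ) (ν : ι → ℝ) (χ : ℝ → ℝ)
    (Φ : ι → ℂ → ℂ) : Matrix ι ι ℂ :=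
  of fun j k => ∫ x, verticalHeatMean t (Φ j) x * (χ x * heatKernel t x (ν k))

section CompressedKernel

variable {ι : Type*} [Fintype ι] {t : ℝ} {ν : ι → ℝ} {χ : ℝ → ℝ} {Φ : ι → ℂ → ℂ}
  (hG : ∀ j k, Integrable (weightedVerticalIntegrand t (ν k) χ (Φ j)) (volume.prod volume))
include hG

theorem integral_det_kernel_eq_sum_det_submatrix {κ : Type*} [Fintype κ] [DecidableEq κ] :
    ∫ x : κ → ℝ, (∏ i, (χ (x i) : ℂ)) *
      det (of fun i k => ∑ j, (heatKernel t (x i) (ν j) : ℂ) * verticalHeatMean t (Φ j) (x k))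
      = ∑ f : κ → ι, det ((compressedKernel t ν χ Φ).submatrix f f) := by
  rw [compressedKernel,
    ← integral_det_degenerate_kernel fun j k => integrable_verticalHeatMean_mul (hG j k)]
  refine integral_congr_ae (.of_forall fun x => ?_)
  dsimp only
  rw [← det_mul_column]
  simp_rw [of_apply, mul_sum, mul_assoc]

theorem integral_integral_det_eq_det_one_sub_compressedKernel [DecidableEq ι] (ht : 0 < t) :
    ∫ v : ι → ℝ, ∫ w : ι → ℝ,
      det (of fun j k => (if j = k then (1 : ℂ) else 0) -
        Φ j ((v k : ℂ) + I * (w k : ℂ)) * (χ (v k) : ℂ)) *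
        ∏ k, (heatKernel t (v k) (ν k) : ℂ) * (heatKernel t (w k) 0 : ℂ)
      = det (1 - compressedKernel t ν χ Φ) := by
  set F : ι → ι → ℝ × ℝ → ℂ := fun j k q =>
    (heatKernel t q.1 (ν k) * heatKernel t q.2 0 : ℂ) *
      ((if j = k then 1 else 0) - Φ j ((q.1 : ℂ) + I * (q.2 : ℂ)) * χ q.1)
  have hF : ∀ j k, Integrable (F j k) (volume.prod volume) := fun j k =>
    integrable_heatKernel_prod_mul_sub (hG j k) ht.le _
  calc _ = ∫ v : ι → ℝ, ∫ w : ι → ℝ, det (of fun j k => F j k (v k, w k)) := by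
        refine integral_congr_ae (.of_forall fun v => integral_congr_ae (.of_forall fun w => ?_))
        dsimp only
        rw [mul_comm, ← det_mul_row]
        rfl
    _ = ∫ q : ι → ℝ × ℝ, det (of fun j k => F j k (q k)) :=
        integral_integral_pi_eq_integral_pi_prod (integrable_det_of_columns hF)
    _ = det (of fun j k => ∫ q, F j k q ∂(volume.prod volume)) := integral_det_of_columns hF
    _ = det (1 - compressedKernel t ν χ Φ) := by
        congr 1 with j k
        rw [of_apply, integral_heatKernel_prod_mul_sub (hG j k) ht]
        simp [compressedKernel, one_apply]

end CompressedKernel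

theorem cbm_representation_general (N : ℕ) (t : ℝ) (ht : 0 < t)
    (ν : Fin N → ℝ) (χ : ℝ → ℝ) (hχ : Measurable χ) (hχbd : ∃ C : ℝ, ∀ x, |χ x| ≤ C)
    (Φ : Fin N → ℂ → ℂ)
    (hint : ∀ j k : Fin N,
      Integrable (fun q : ℝ × ℝ =>
        Φ j ((q.1 : ℂ) + Complex.I * (q.2 : ℂ)) *
          (heatKernel t q.1 (ν k) : ℂ) * (heatKernel t q.2 0 : ℂ))) :
    ∑ L ∈ Finset.range (N + 1),
        ((-1 : ℂ) ^ L / (Nat.factorial L : ℂ)) *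
          ∫ x : Fin L → ℝ,
            (∏ i : Fin L, (χ (x i) : ℂ)) *
              Matrix.det (Matrix.of fun i k : Fin L =>
                ∑ j : Fin N, (heatKernel t (x i) (ν j) : ℂ) *
                  ∫ y : ℝ, (heatKernel t y 0 : ℂ) *
                    Φ j ((x k : ℂ) + Complex.I * (y : ℂ))) =
      ∫ v : Fin N → ℝ, ∫ w : Fin N → ℝ,
        Matrix.det (Matrix.of fun j k : Fin N =>
          (if j = k then (1 : ℂ) else 0) -
            Φ j ((v k : ℂ) + Complex.I * (w k : ℂ)) * (χ (v k) : ℂ)) *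
          ∏ k : Fin N, (heatKernel t (v k) (ν k) : ℂ) * (heatKernel t (w k) 0 : ℂ) := by
  have hG := fun j k => integrable_weightedVerticalIntegrand hχ hχbd (hint j k)
  rw [integral_integral_det_eq_det_one_sub_compressedKernel hG ht, det_one_sub_eq_sum_range,
    Fintype.card_fin]
  exact sum_congr rfl fun L _ => congrArg _ (integral_det_kernel_eq_sum_det_submatrix hG)

/-- Complex-Brownian-motion representation: the terminating Fredholm expansion of the
kernel `K(x,x') = Σ_j p(t,x|ν_j) ∫ p(t,y|0) Φ_j(x'+iy) dy` equals the expectation,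
over independent complex Gaussian variables `v_k + i w_k` centered at `ν_k`, of the
`N × N` determinant `det[δ_{jk} − Φ_j(v_k + i w_k) χ(v_k)]`. -/
theorem cbm_representation (N : ℕ) (hN : 1 ≤ N) (t : ℝ) (ht : 0 < t)
    (ν : Fin N → ℝ) (χ : ℝ → ℝ) (hχ : Measurable χ) (hχbd : ∃ C : ℝ, ∀ x, |χ x| ≤ C)
    (Φ : Fin N → ℂ → ℂ) (hΦ : ∀ j, Measurable (Φ j))
    (hint : ∀ j k : Fin N,
      Integrable (fun q : ℝ × ℝ =>
        Φ j ((q.1 : ℂ) + Complex.I * (q.2 : ℂ)) *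
          (heatKernel t q.1 (ν k) : ℂ) * (heatKernel t q.2 0 : ℂ))) :
    ∑ L ∈ Finset.range (N + 1),
        ((-1 : ℂ) ^ L / (Nat.factorial L : ℂ)) *
          ∫ x : Fin L → ℝ,
            (∏ i : Fin L, (χ (x i) : ℂ)) *
              Matrix.det (Matrix.of fun i k : Fin L =>
                ∑ j : Fin N, (heatKernel t (x i) (ν j) : ℂ) *
                  ∫ y : ℝ, (heatKernel t y 0 : ℂ) *
                    Φ j ((x k : ℂ) + Complex.I * (y : ℂ))) =
      ∫ v : Fin N → ℝ, ∫ w : Fin N → ℝ,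
        Matrix.det (Matrix.of fun j k : Fin N =>
          (if j = k then (1 : ℂ) else 0) -
            Φ j ((v k : ℂ) + Complex.I * (w k : ℂ)) * (χ (v k) : ℂ)) *
          ∏ k : Fin N, (heatKernel t (v k) (ν k) : ℂ) * (heatKernel t (w k) 0 : ℂ) :=
  cbm_representation_general N t ht ν χ hχ hχbd Φ hint
end

section
/- Let N ≥ 1 and let ζ = (ζ₁,…,ζ_N), η = (η₁,…,η_N) ∈ ℝ^N. Then the limit as ε → 0⁺ of ε^{−N(N−1)/2} · det_{1 ≤ j,k ≤ N}[exp(ε ζ_j η_k)] equals h_N(ζ) · h_N(η) / ∏_{j=1}^N (j−1)!. (This small-parameter asymptotic of the exponential determinant underlies the limit x → 0 of the drifted noncolliding Brownian motion transition density and the combinatorial limit of Whittaker functions.) -/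
/-!
Expanding over permutations, `det[exp(ε ζ_j η_k)] = ∑_σ sgn σ · exp(ε c_σ)` with
`c_σ = ∑_j ζ_{σ j} η_j`, so its `m`-th Taylor coefficient is `p_m / m!` where
`p_m = ∑_σ sgn σ · c_σ^m`. The multinomial theorem writes `p_m` as a sum over exponent vectors
`k` with `∑ k = m` of `det[ζ_i^{k_j}]`, which vanishes unless the `k_j` are distinct. Distinct
naturals sum to at least `0 + 1 + ⋯ + (N - 1) = M`, with equality only for a permutation of
`0, …, N - 1`. Hence `p_m = 0` for `m < M`, and `p_M = M! / ∏_j j! · h_N(ζ) h_N(η)` by two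
Vandermonde determinants; the Taylor remainder of order `M` is `o(ε^M)`.
-/

open Filter Topology Finset

/-- Vandermonde product `h_N(v) = ∏_{j<ℓ}(v_ℓ − v_j)`. -/
def vdm {N : ℕ} (v : Fin N → ℝ) : ℝ :=
  ∏ p ∈ Finset.univ.filter (fun p : Fin N × Fin N => p.1 < p.2), (v p.2 - v p.1)

open Asymptotics Equiv

theorem tendsto_sum_mul_exp_div_pow {ι : Type*} (s : Finset ι) (a c : ι → ℝ) (M : ℕ)
    (hlow : ∀ m < M, ∑ i ∈ s, a i * c i ^ m = 0) :
    Tendsto (fun ε => (∑ i ∈ s, a i * Real.exp (ε * c i)) / ε ^ M) (𝓝[≠] 0)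
      (𝓝 ((∑ i ∈ s, a i * c i ^ M) / M.factorial)) := by
  set L := (∑ i ∈ s, a i * c i ^ M) / M.factorial
  have taylor (ε : ℝ) :
      ∑ i ∈ s, a i * ∑ m ∈ range (M + 1), (ε * c i) ^ m / m.factorial = ε ^ M * L := by
    simp_rw [mul_sum, mul_pow]
    rw [sum_comm, sum_range_succ, sum_eq_zero fun m hm => ?_, zero_add]
    · simp_rw [L, mul_div_assoc', mul_sum, sum_div]
      refine sum_congr rfl fun i _ => by ring
    · calc ∑ i ∈ s, a i * (ε ^ m * c i ^ m / m.factorial)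
          = ε ^ m / m.factorial * ∑ i ∈ s, a i * c i ^ m := by
            rw [mul_sum]; exact sum_congr rfl fun i _ => by ring
        _ = 0 := by rw [hlow m (mem_range.1 hm), mul_zero]
  have remainder : (fun ε => ∑ i ∈ s, a i * Real.exp (ε * c i) - ε ^ M * L) =o[𝓝 0] (· ^ M) := by
    simp_rw [← taylor, ← sum_sub_distrib, ← mul_sub]
    refine IsLittleO.fun_sum fun i _ => IsLittleO.const_mul_left ?_ (a i)
    have hc : Tendsto (fun ε : ℝ => ε * c i) (𝓝 0) (𝓝 0) := by
      simpa using (continuous_mul_const (c i)).tendsto 0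
    refine ((Real.exp_sub_sum_range_succ_isLittleO_pow M).comp_tendsto hc).trans_isBigO ?_
    exact (isBigO_const_mul_self (c i ^ M) (· ^ M) (𝓝 0)).congr_left fun ε => by
      simp only [Function.comp_def, mul_pow, mul_comm]
  rw [← tendsto_sub_nhds_zero_iff]
  refine (remainder.tendsto_div_nhds_zero.mono_left nhdsWithin_le_nhds).congr' ?_
  filter_upwards [self_mem_nhdsWithin] with ε hε
  rw [sub_div, mul_div_cancel_left₀ _ (pow_ne_zero M hε)]

theorem Finset.sum_range_card_add_card_sdiff_le (s : Finset ℕ) :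
    ∑ i ∈ range #s, i + #(range #s \ s) ≤ ∑ i ∈ s, i := by
  set r := range #s
  -- `#(r \ s) = #(s \ r)`, and every element of `r \ s` lies below every element of `s \ r`.
  calc ∑ i ∈ r, i + #(r \ s)
      = ∑ i ∈ r ∩ s, i + ∑ i ∈ r \ s, (i + 1) := by
        rw [← sum_inter_add_sum_sdiff r s, sum_add_distrib, sum_const, smul_eq_mul, mul_one,
          add_assoc]
    _ ≤ ∑ i ∈ s ∩ r, i + #(s \ r) * #s := by
        rw [inter_comm, ← card_sdiff_comm (by simp [r])]
        gcongr
        exact sum_le_card_nsmul _ _ _ fun i hi => by simp_all [r]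
    _ ≤ ∑ i ∈ s, i := by
        rw [← sum_inter_add_sum_sdiff s r]
        gcongr
        exact card_nsmul_le_sum _ _ _ fun i hi => by simp_all [r]

theorem Finset.eq_range_card_of_sum_le (s : Finset ℕ) (h : ∑ i ∈ s, i ≤ ∑ i ∈ range #s, i) :
    s = range #s := by
  have hsdiff : range #s \ s = ∅ := by
    have := s.sum_range_card_add_card_sdiff_le
    rw [← card_eq_zero]; omega
  exact (eq_of_subset_of_card_le (sdiff_eq_empty_iff_subset.1 hsdiff) (by simp)).symm

section Injective

variable {N : ℕ} {g : Fin N → ℕ}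

theorem Function.Injective.sum_range_le_sum (hg : Function.Injective g) :
    ∑ i ∈ range N, i ≤ ∑ j, g j := by
  have hcard : #(univ.image g) = N := by simp [card_image_of_injective _ hg]
  have := (univ.image g).sum_range_card_add_card_sdiff_le
  rw [hcard, sum_image fun x _ y _ h => hg h] at this
  omega

theorem Function.Injective.exists_perm_of_sum_le (hg : Function.Injective g)
    (h : ∑ j, g j ≤ ∑ i ∈ range N, i) : ∃ τ : Equiv.Perm (Fin N), ∀ j, g j = τ j := by
  have hcard : #(univ.image g) = N := by simp [card_image_of_injective _ hg]
  have himage := (univ.image g).eq_range_card_of_sum_le (by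
    rwa [hcard, sum_image fun x _ y _ h => hg h])
  rw [hcard] at himage
  have hlt (j : Fin N) : g j < N := by simp [← mem_range, ← himage]
  let t : Fin N → Fin N := fun j => ⟨g j, hlt j⟩
  have ht : Function.Injective t := fun a b hab => hg (congrArg Fin.val hab)
  exact ⟨Equiv.ofBijective t ht.bijective_of_finite, fun j => rfl⟩

end Injective

variable {R : Type*} [CommRing R] {N : ℕ}

/-- `m!` times the `m`-th Taylor coefficient of `ε ↦ det[exp(ε ζ_j η_k)]` at `0`. -/
def signedPowerSum (ζ η : Fin N → R) (m : ℕ) : R :=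
  ∑ σ : Perm (Fin N), ((Perm.sign σ : ℤ) : R) * (∑ j, ζ (σ j) * η j) ^ m

theorem signedPowerSum_eq_sum_piAntidiag (ζ η : Fin N → R) (m : ℕ) :
    signedPowerSum ζ η m = ∑ k ∈ piAntidiag univ m,
      (Nat.multinomial univ k : R) * (∏ j, η j ^ k j) * (Matrix.of fun i j => ζ i ^ k j).det := by
  simp only [signedPowerSum, sum_pow_eq_sum_piAntidiag, mul_sum]
  rw [sum_comm]
  refine sum_congr rfl fun k _ => ?_
  rw [Matrix.det_apply', mul_sum]
  refine sum_congr rfl fun σ _ => ?_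
  simp only [mul_pow, prod_mul_distrib, Matrix.of_apply]
  ring

theorem det_of_pow_eq_zero_of_not_injective (ζ : Fin N → R) {k : Fin N → ℕ}
    (hk : ¬ Function.Injective k) : (Matrix.of fun i j => ζ i ^ k j).det = 0 := by
  obtain ⟨a, b, hab, hne⟩ := Function.not_injective_iff.1 hk
  exact Matrix.det_zero_of_column_eq hne fun i => by simp [hab]

theorem det_of_pow_perm (ζ : Fin N → R) (τ : Perm (Fin N)) :
    (Matrix.of fun i j => ζ i ^ (τ j : ℕ)).det = Perm.sign τ * (Matrix.vandermonde ζ).det := by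
  rw [← Matrix.det_permute']
  rfl

theorem sum_sign_mul_prod_pow_perm (η : Fin N → R) :
    ∑ τ : Perm (Fin N), ((Perm.sign τ : ℤ) : R) * ∏ j, η j ^ (τ j : ℕ) =
      (Matrix.vandermonde η).det := by
  rw [← Matrix.det_transpose, Matrix.det_apply']
  simp [Matrix.vandermonde]

theorem prod_factorial_mul_multinomial_perm (τ : Perm (Fin N)) :
    (∏ i ∈ range N, i.factorial) * Nat.multinomial univ (fun j => (τ j : ℕ)) =
      (∑ i ∈ range N, i).factorial := by
  have h := Nat.multinomial_spec univ fun j => (τ j : ℕ)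
  rwa [Equiv.prod_comp τ fun j => (j : ℕ).factorial, Equiv.sum_comp τ fun j => (j : ℕ),
    Fin.prod_univ_eq_prod_range (fun i => i.factorial),
    Fin.sum_univ_eq_sum_range (fun i => i)] at h

theorem signedPowerSum_eq_zero_of_lt (ζ η : Fin N → R) {m : ℕ} (hm : m < ∑ i ∈ range N, i) :
    signedPowerSum ζ η m = 0 := by
  rw [signedPowerSum_eq_sum_piAntidiag]
  refine sum_eq_zero fun k hk => ?_
  have hkm : ∑ j, k j = m := (mem_piAntidiag.1 hk).1
  have hk : ¬ Function.Injective k := fun hinj => (hinj.sum_range_le_sum.trans_eq hkm).not_gt hm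
  rw [det_of_pow_eq_zero_of_not_injective ζ hk, mul_zero]

theorem prod_factorial_mul_signedPowerSum (ζ η : Fin N → R) :
    (∏ i ∈ range N, (i.factorial : R)) * signedPowerSum ζ η (∑ i ∈ range N, i) =
      (∑ i ∈ range N, i).factorial * (Matrix.vandermonde ζ).det * (Matrix.vandermonde η).det := by
  set M := ∑ i ∈ range N, i
  let e : Perm (Fin N) ↪ (Fin N → ℕ) :=
    ⟨fun τ j => τ j, fun σ τ h => Equiv.ext fun j => Fin.val_injective (congrFun h j)⟩
  have hsub : univ.map e ⊆ piAntidiag univ M := fun k hk => by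
    obtain ⟨τ, -, rfl⟩ := mem_map.1 hk
    refine mem_piAntidiag.2 ⟨?_, fun j _ => mem_univ j⟩
    change ∑ j, (τ j : ℕ) = M
    rw [Equiv.sum_comp τ fun j => (j : ℕ), Fin.sum_univ_eq_sum_range (fun i => i)]
  have hvanish : ∀ k ∈ piAntidiag univ M, k ∉ univ.map e →
      (Nat.multinomial univ k : R) * (∏ j, η j ^ k j) * (Matrix.of fun i j => ζ i ^ k j).det =
        0 := by
    intro k hk hke
    by_cases hinj : Function.Injective k
    · obtain ⟨τ, hτ⟩ := hinj.exists_perm_of_sum_le (mem_piAntidiag.1 hk).1.le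
      exact absurd (mem_map.2 ⟨τ, mem_univ τ, funext fun j => (hτ j).symm⟩) hke
    · rw [det_of_pow_eq_zero_of_not_injective ζ hinj, mul_zero]
  rw [signedPowerSum_eq_sum_piAntidiag, ← sum_subset hsub hvanish, sum_map, mul_sum]
  calc ∑ τ : Perm (Fin N), (∏ i ∈ range N, (i.factorial : R)) *
        ((Nat.multinomial univ (fun j => (τ j : ℕ)) : R) *
        (∏ j, η j ^ (τ j : ℕ)) * (Matrix.of fun i j => ζ i ^ (τ j : ℕ)).det)
      = ∑ τ : Perm (Fin N), M.factorial * (Matrix.vandermonde ζ).det *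
          (((Perm.sign τ : ℤ) : R) * ∏ j, η j ^ (τ j : ℕ)) := by
        refine sum_congr rfl fun τ _ => ?_
        rw [det_of_pow_perm, ← prod_factorial_mul_multinomial_perm τ]
        push_cast
        ring
    _ = _ := by rw [← mul_sum, sum_sign_mul_prod_pow_perm]

theorem vdm_eq_det_vandermonde (v : Fin N → ℝ) : vdm v = (Matrix.vandermonde v).det := by
  rw [Matrix.det_vandermonde, vdm, prod_filter, Fintype.prod_prod_type]
  refine prod_congr rfl fun i _ => ?_
  rw [← prod_filter]
  congr 1
  ext j
  simp [mem_Ioi]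

theorem det_of_exp_mul_mul (ε : ℝ) (ζ η : Fin N → ℝ) :
    (Matrix.of fun j k => Real.exp (ε * ζ j * η k)).det =
      ∑ σ : Perm (Fin N), ((Perm.sign σ : ℤ) : ℝ) * Real.exp (ε * ∑ j, ζ (σ j) * η j) := by
  rw [Matrix.det_apply']
  refine sum_congr rfl fun σ _ => ?_
  simp only [Matrix.of_apply, ← Real.exp_sum, mul_sum, mul_assoc]

theorem exp_det_small_parameter_limit_general (N : ℕ) (ζ η : Fin N → ℝ) :
    Tendsto
      (fun ε : ℝ =>
        Matrix.det (Matrix.of fun j k : Fin N => Real.exp (ε * ζ j * η k)) /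
          ε ^ (N * (N - 1) / 2))
      (𝓝[>] 0)
      (𝓝 (vdm ζ * vdm η / ∏ j ∈ Finset.range N, (Nat.factorial j : ℝ))) := by
  have hM : N * (N - 1) / 2 = ∑ i ∈ range N, i := (sum_range_id N).symm
  have hlim : signedPowerSum ζ η (∑ i ∈ range N, i) / (∑ i ∈ range N, i).factorial =
      vdm ζ * vdm η / ∏ j ∈ range N, (j.factorial : ℝ) := by
    rw [div_eq_div_iff (by positivity) (by positivity), vdm_eq_det_vandermonde,
      vdm_eq_det_vandermonde, mul_comm, prod_factorial_mul_signedPowerSum]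
    ring
  simp_rw [hM, ← hlim, det_of_exp_mul_mul]
  exact (tendsto_sum_mul_exp_div_pow univ _ _ _ fun m hm =>
    signedPowerSum_eq_zero_of_lt ζ η hm).mono_left (nhdsGT_le_nhdsNE 0)

/-- Small-parameter asymptotics of the exponential determinant:
`ε^{−N(N−1)/2} det[e^{ε ζ_j η_k}] → h_N(ζ) h_N(η) / ∏_{j=1}^N (j−1)!` as `ε → 0⁺`. -/
theorem exp_det_small_parameter_limit (N : ℕ) (hN : 1 ≤ N) (ζ η : Fin N → ℝ) :
    Tendsto
      (fun ε : ℝ =>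
        Matrix.det (Matrix.of fun j k : Fin N => Real.exp (ε * ζ j * η k)) /
          ε ^ (N * (N - 1) / 2))
      (𝓝[>] 0)
      (𝓝 (vdm ζ * vdm η / ∏ j ∈ Finset.range N, (Nat.factorial j : ℝ))) :=
  exp_det_small_parameter_limit_general N ζ η
end
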